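/- SEC sufficient condition for the ℓ_{1-2}-REC: If (√t − 1)·σ_min(s+t) > (√s + 1)·σ_max(t), then A satisfies the ℓ_{1-2}-REC(s,t); moreover φ(s,t) ≥ σ_min(s+t) − ((√s+1)/(√t−1))·σ_max(t) > 0. -/

import Mathlib

/-!
Write `J = I ∪ T` and `μ = min_{i ∈ T} |x i|`, which bounds every entry of `x` off `J`. Peeling
off the `t` largest remaining entries of `x_{Jᶜ}` block by block, each block is `t`-sparse and its
entries are at most the mean of `|x|` on the previous block, so any subadditive `N` with
`N ≤ C ‖·‖₂` on `t`-sparse vectors satisfies `N (x_{Jᶜ}) ≤ C τ`, `τ = √t μ + ‖x_{Jᶜ}‖₁ / √t`.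
Applied to `‖·‖₂` and to `‖A ·‖₂`, and combined with `‖x_T‖₁ ≥ t μ`, `‖x_I‖₁ ≤ √s ‖x_J‖₂` and the
cone condition, this gives `(√t - 1) τ ≤ (√s + 1) ‖x_J‖₂`; then
`‖A x‖₂ ≥ σ_min(s+t) ‖x_J‖₂ - σ_max(t) τ`.
-/

open Finset

noncomputable def l1 {k : ℕ} (x : Fin k → ℝ) : ℝ := ∑ i, |x i|

noncomputable def l2 {k : ℕ} (x : Fin k → ℝ) : ℝ := Real.sqrt (∑ i, (x i)^2)

def restr {k : ℕ} (I : Finset (Fin k)) (x : Fin k → ℝ) : Fin k → ℝ :=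
  fun i => if i ∈ I then x i else 0


def TLargest {k : ℕ} (x : Fin k → ℝ) (I : Finset (Fin k)) (t : ℕ) (T : Finset (Fin k)) : Prop :=
  T ⊆ Iᶜ ∧ T.card = min t Iᶜ.card ∧ ∀ i ∈ T, ∀ j ∈ Iᶜ \ T, |x j| ≤ |x i|

theorem Finset.exists_subset_card_eq_forall_le {α β : Type*} [DecidableEq α] [LinearOrder β]
    (f : α → β) {S : Finset α} {c : ℕ} (hc : c ≤ #S) :
    ∃ B ⊆ S, #B = c ∧ ∀ i ∈ B, ∀ j ∈ S \ B, f j ≤ f i := by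
  induction c with
  | zero => exact ⟨∅, empty_subset _, rfl, by simp⟩
  | succ c ih =>
    obtain ⟨B, hBS, hB, hBmax⟩ := ih (Nat.le_of_succ_le hc)
    have hne : (S \ B).Nonempty := by
      rw [← card_pos, card_sdiff_of_subset hBS]
      omega
    obtain ⟨i₀, hi₀, hi₀max⟩ := exists_max_image (S \ B) f hne
    rw [mem_sdiff] at hi₀
    refine ⟨insert i₀ B, insert_subset hi₀.1 hBS, by rw [card_insert_of_notMem hi₀.2, hB], ?_⟩
    intro i hi j hj
    rw [sdiff_insert] at hj
    rcases mem_insert.1 hi with rfl | hi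
    · exact hi₀max j (mem_of_mem_erase hj)
    · exact hBmax i hi j (mem_of_mem_erase hj)

section Norms

variable {k : ℕ}

lemma l2_eq_norm (x : Fin k → ℝ) : l2 x = ‖WithLp.toLp 2 x‖ := by
  simp [l2, EuclideanSpace.norm_eq]

lemma l2_nonneg (x : Fin k → ℝ) : 0 ≤ l2 x := Real.sqrt_nonneg _

lemma l1_nonneg (x : Fin k → ℝ) : 0 ≤ l1 x := sum_nonneg fun i _ => abs_nonneg (x i)

lemma l2_add_le (u v : Fin k → ℝ) : l2 (u + v) ≤ l2 u + l2 v := by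
  simpa only [l2_eq_norm, WithLp.toLp_add] using norm_add_le _ _

lemma l2_sub_le (u v : Fin k → ℝ) : l2 (u - v) ≤ l2 u + l2 v := by
  simpa only [l2_eq_norm, WithLp.toLp_sub] using norm_sub_le _ _

lemma restr_apply_of_notMem {S : Finset (Fin k)} {i : Fin k} (hi : i ∉ S) (x : Fin k → ℝ) :
    restr S x i = 0 := if_neg hi

lemma restr_union_of_disjoint {B C : Finset (Fin k)} (h : Disjoint B C) (x : Fin k → ℝ) :
    restr (B ∪ C) x = restr B x + restr C x := by
  funext i
  by_cases hB : i ∈ B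
  · simp [restr, hB, disjoint_left.1 h hB]
  · simp [restr, hB]

lemma restr_add_restr_compl (S : Finset (Fin k)) (x : Fin k → ℝ) :
    restr S x + restr Sᶜ x = x := by
  rw [← restr_union_of_disjoint disjoint_compl_right, union_compl]
  funext i
  simp [restr]

lemma l1_restr (S : Finset (Fin k)) (x : Fin k → ℝ) : l1 (restr S x) = ∑ i ∈ S, |x i| := by
  simp [l1, restr, apply_ite abs, sum_ite_mem]

lemma l2_restr (S : Finset (Fin k)) (x : Fin k → ℝ) :
    l2 (restr S x) = √(∑ i ∈ S, x i ^ 2) := by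
  simp [l2, restr, apply_ite (· ^ 2), sum_ite_mem]

lemma l1_restr_union_of_disjoint {B C : Finset (Fin k)} (h : Disjoint B C) (x : Fin k → ℝ) :
    l1 (restr (B ∪ C) x) = l1 (restr B x) + l1 (restr C x) := by
  simp only [l1_restr, sum_union h]

lemma l2_restr_mono {B C : Finset (Fin k)} (h : B ⊆ C) (x : Fin k → ℝ) :
    l2 (restr B x) ≤ l2 (restr C x) := by
  simp only [l2_restr]
  exact Real.sqrt_le_sqrt (sum_le_sum_of_subset_of_nonneg h fun i _ _ => sq_nonneg (x i))

lemma l2_restr_le_sqrt_card_mul {S : Finset (Fin k)} {x : Fin k → ℝ} {μ : ℝ} (hμ : 0 ≤ μ)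
    (hxμ : ∀ i ∈ S, |x i| ≤ μ) : l2 (restr S x) ≤ √(#S : ℝ) * μ := by
  rw [l2_restr, ← Real.sqrt_sq hμ, ← Real.sqrt_mul (Nat.cast_nonneg _)]
  refine Real.sqrt_le_sqrt ?_
  rw [← nsmul_eq_mul, ← sum_const]
  exact sum_le_sum fun i hi => sq_le_sq' (abs_le.1 (hxμ i hi)).1 (abs_le.1 (hxμ i hi)).2

lemma card_mul_le_l1_restr {S : Finset (Fin k)} {x : Fin k → ℝ} {μ : ℝ}
    (hxμ : ∀ i ∈ S, μ ≤ |x i|) : #S * μ ≤ l1 (restr S x) := by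
  rw [l1_restr, ← nsmul_eq_mul, ← sum_const]
  exact sum_le_sum hxμ

lemma l1_restr_le_sqrt_card_mul_l2_restr (S : Finset (Fin k)) (x : Fin k → ℝ) :
    l1 (restr S x) ≤ √(#S : ℝ) * l2 (restr S x) := by
  rw [l1_restr, l2_restr, ← Real.sqrt_mul (Nat.cast_nonneg _),
    ← Real.sqrt_sq (sum_nonneg fun i _ => abs_nonneg (x i))]
  refine Real.sqrt_le_sqrt ?_
  simpa only [sq_abs] using sq_sum_le_card_mul_sum_sq (s := S) (f := fun i => |x i|)

end Norms

section Shifting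

variable {k t : ℕ}

theorem apply_restr_le_of_sparse_le (ht : 0 < t) {N : (Fin k → ℝ) → ℝ} {C : ℝ} (hC : 0 ≤ C)
    (hN_add : ∀ u v, N (u + v) ≤ N u + N v)
    (hN_sparse : ∀ (v : Fin k → ℝ) (K : Finset (Fin k)), #K ≤ t →
      (∀ i ∉ K, v i = 0) → N v ≤ C * l2 v)
    (x : Fin k → ℝ) (S : Finset (Fin k)) {μ : ℝ} (hμ : 0 ≤ μ) (hxμ : ∀ j ∈ S, |x j| ≤ μ) :
    N (restr S x) ≤ C * (√t * μ + l1 (restr S x) / √t) := by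
  have hsqrt_t : 0 < √(t : ℝ) := Real.sqrt_pos.2 (Nat.cast_pos.2 ht)
  induction S using Finset.strongInduction generalizing μ with
  | H S ih =>
  by_cases hS : #S ≤ t
  · have hl1 : 0 ≤ l1 (restr S x) / √t := div_nonneg (l1_nonneg _) hsqrt_t.le
    calc N (restr S x) ≤ C * l2 (restr S x) :=
          hN_sparse _ S hS fun i hi => restr_apply_of_notMem hi x
      _ ≤ C * (√t * μ) := by
          gcongr
          exact (l2_restr_le_sqrt_card_mul hμ hxμ).trans (by gcongr)
      _ ≤ C * (√t * μ + l1 (restr S x) / √t) := by gcongr; exact le_add_of_nonneg_right hl1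
  · obtain ⟨B, hBS, hB, hBmax⟩ :=
      exists_subset_card_eq_forall_le (fun i => |x i|) (not_le.1 hS).le
    have hBne : B.Nonempty := card_pos.1 (hB ▸ ht)
    set μ' := B.inf' hBne fun i => |x i|
    have hμ' : 0 ≤ μ' := le_inf' _ _ fun i _ => abs_nonneg (x i)
    have hrest : ∀ j ∈ S \ B, |x j| ≤ μ' := fun j hj => le_inf' _ _ fun i hi => hBmax i hi j hj
    have hμ'_le : √t * μ' ≤ l1 (restr B x) / √t := by
      rw [le_div_iff₀ hsqrt_t, mul_right_comm, Real.mul_self_sqrt (Nat.cast_nonneg _), ← hB]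
      exact card_mul_le_l1_restr fun i hi => inf'_le _ hi
    have hB_le : N (restr B x) ≤ C * (√t * μ) := by
      calc N (restr B x) ≤ C * l2 (restr B x) :=
            hN_sparse _ B hB.le fun i hi => restr_apply_of_notMem hi x
        _ ≤ C * (√t * μ) := by
            rw [← hB]
            gcongr
            exact l2_restr_le_sqrt_card_mul hμ fun i hi => hxμ i (hBS hi)
    have hsplit := union_sdiff_of_subset hBS
    have hl1 : l1 (restr S x) = l1 (restr B x) + l1 (restr (S \ B) x) := by
      rw [← l1_restr_union_of_disjoint disjoint_sdiff, hsplit]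
    calc N (restr S x) = N (restr B x + restr (S \ B) x) := by
          rw [← restr_union_of_disjoint disjoint_sdiff, hsplit]
      _ ≤ N (restr B x) + N (restr (S \ B) x) := hN_add _ _
      _ ≤ C * (√t * μ) + C * (√t * μ' + l1 (restr (S \ B) x) / √t) :=
          add_le_add hB_le (ih _ (sdiff_ssubset hBS hBne) hμ' hrest)
      _ ≤ C * (√t * μ + l1 (restr S x) / √t) := by
          rw [hl1, add_div]
          linear_combination mul_le_mul_of_nonneg_left hμ'_le hC

end Shifting

section Cone

variable {k : ℕ}

lemma TLargest.exists_threshold {x : Fin k → ℝ} {I T : Finset (Fin k)} {t : ℕ}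
    (hT : TLargest x I t T) (ht : 0 < t) :
    ∃ μ, 0 ≤ μ ∧ (∀ j ∈ (I ∪ T)ᶜ, |x j| ≤ μ) ∧ t * μ ≤ l1 (restr T x) := by
  obtain ⟨hTI, hcard, hTmax⟩ := hT
  by_cases hTeq : T = Iᶜ
  · refine ⟨0, le_rfl, ?_, by simpa using l1_nonneg _⟩
    simp [hTeq]
  · have hTt : #T = t := by
      have := card_lt_card (ssubset_of_subset_of_ne hTI hTeq)
      omega
    have hTne : T.Nonempty := card_pos.1 (hTt ▸ ht)
    refine ⟨T.inf' hTne fun i => |x i|, le_inf' _ _ fun i _ => abs_nonneg (x i), ?_, ?_⟩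
    · intro j hj
      rw [compl_union, mem_inter] at hj
      exact le_inf' _ _ fun i hi => hTmax i hi j (mem_sdiff.2 ⟨hj.1, mem_compl.1 hj.2⟩)
    · rw [← hTt]
      exact card_mul_le_l1_restr fun i hi => inf'_le _ hi

lemma sqrt_sub_one_mul_tail_le_of_cone {x : Fin k → ℝ} {I T : Finset (Fin k)} {s t : ℕ}
    (ht : 0 < t) (hI : #I ≤ s) (hTI : T ⊆ Iᶜ) (hcone : l1 (restr Iᶜ x) ≤ l1 (restr I x) + l2 x)
    {μ : ℝ} (hμ : 0 ≤ μ) (hxμ : ∀ j ∈ (I ∪ T)ᶜ, |x j| ≤ μ) (hTμ : t * μ ≤ l1 (restr T x)) :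
    (√t - 1) * (√t * μ + l1 (restr (I ∪ T)ᶜ x) / √t) ≤ (√s + 1) * l2 (restr (I ∪ T) x) := by
  set J := I ∪ T
  set τ := √t * μ + l1 (restr Jᶜ x) / √t
  have htail : l2 (restr Jᶜ x) ≤ τ := by
    simpa using apply_restr_le_of_sparse_le ht zero_le_one l2_add_le
      (fun v _ _ _ => (one_mul _).ge) x Jᶜ hμ hxμ
  have hIc : l1 (restr Iᶜ x) = l1 (restr T x) + l1 (restr Jᶜ x) := by
    have hIc_eq : T ∪ Jᶜ = Iᶜ := by
      ext i
      by_cases hi : i ∈ T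
      · simpa [hi] using hTI hi
      · simp [J, hi]
    rw [← hIc_eq, l1_restr_union_of_disjoint]
    exact disjoint_left.2 fun i hi hJ => mem_compl.1 hJ (mem_union_right I hi)
  have hlI : l1 (restr I x) ≤ √s * l2 (restr J x) := by
    refine (l1_restr_le_sqrt_card_mul_l2_restr I x).trans ?_
    exact mul_le_mul (Real.sqrt_le_sqrt (by exact_mod_cast hI))
      (l2_restr_mono subset_union_left x) (l2_nonneg _) (Real.sqrt_nonneg _)
  have hl2 : l2 x ≤ l2 (restr J x) + τ := by
    calc l2 x = l2 (restr J x + restr Jᶜ x) := by rw [restr_add_restr_compl]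
      _ ≤ l2 (restr J x) + τ := (l2_add_le _ _).trans (by gcongr)
  have hτ : (√t - 1) * τ = t * μ + l1 (restr Jᶜ x) - τ := by
    have := Real.mul_self_sqrt (Nat.cast_nonneg (α := ℝ) t)
    simp only [τ]
    field_simp
    linear_combination (μ * √t) * this
  rw [hτ]
  linarith

end Cone

lemma nonneg_of_sparse_le {m n t : ℕ} [Nonempty (Fin n)] (ht : 0 < t)
    {A : Matrix (Fin m) (Fin n) ℝ} {σ : ℝ}
    (h : ∀ (x : Fin n → ℝ) (K : Finset (Fin n)), #K ≤ t →
      (∀ i ∉ K, x i = 0) → l2 (A.mulVec x) ≤ σ * l2 x) : 0 ≤ σ := by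
  obtain ⟨i⟩ := ‹Nonempty (Fin n)›
  have hsingle : l2 (Pi.single i 1 : Fin n → ℝ) = 1 := by
    simp [l2, Pi.single_apply, apply_ite (· ^ 2)]
  have := h (Pi.single i 1) {i} (by rw [card_singleton]; exact ht) fun j hj =>
    Pi.single_eq_of_ne (mem_singleton.not.1 hj) _
  rw [hsingle, mul_one] at this
  exact (l2_nonneg _).trans this

theorem stmt15 {m n : ℕ} (A : Matrix (Fin m) (Fin n) ℝ) (s t : ℕ) (ht : 1 < t)
    (σmin σmax : ℝ)
    (hmin : ∀ (x : Fin n → ℝ) (K : Finset (Fin n)), K.card ≤ s + t →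
      (∀ i ∉ K, x i = 0) → σmin * l2 x ≤ l2 (A.mulVec x))
    (hmax : ∀ (x : Fin n → ℝ) (K : Finset (Fin n)), K.card ≤ t →
      (∀ i ∉ K, x i = 0) → l2 (A.mulVec x) ≤ σmax * l2 x)
    (hcond : (Real.sqrt t - 1) * σmin > (Real.sqrt s + 1) * σmax) :
    0 < σmin - (Real.sqrt s + 1) / (Real.sqrt t - 1) * σmax ∧
    ∀ (x : Fin n → ℝ) (I T : Finset (Fin n)), I.card ≤ s →
      l1 (restr Iᶜ x) ≤ l1 (restr I x) + l2 x → TLargest x I t T →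
      (σmin - (Real.sqrt s + 1) / (Real.sqrt t - 1) * σmax) * l2 (restr (I ∪ T) x) ≤
        l2 (A.mulVec x) := by
  have hgap : 0 < √(t : ℝ) - 1 :=
    sub_pos.2 (Real.lt_sqrt_of_sq_lt (by norm_num; exact_mod_cast ht))
  refine ⟨by rw [sub_pos, div_mul_eq_mul_div, div_lt_iff₀ hgap]; linarith, ?_⟩
  intro x I T hI hcone hT
  rcases isEmpty_or_nonempty (Fin n) with hn | hn
  · simp [l2]
  have hσmax : 0 ≤ σmax := nonneg_of_sparse_le (by omega) hmax
  obtain ⟨μ, hμ, hxμ, hTμ⟩ := hT.exists_threshold (by omega)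
  set J := I ∪ T
  have htail := sqrt_sub_one_mul_tail_le_of_cone (by omega) hI hT.1 hcone hμ hxμ hTμ
  have hAtail := apply_restr_le_of_sparse_le (by omega) hσmax
    (fun u v => by simpa only [Matrix.mulVec_add] using l2_add_le _ _) hmax x Jᶜ hμ hxμ
  have hAJ : σmin * l2 (restr J x) ≤ l2 (A.mulVec (restr J x)) :=
    hmin _ J ((card_union_le I T).trans (add_le_add hI (hT.2.1 ▸ min_le_left _ _)))
      fun i hi => restr_apply_of_notMem hi x
  have hsplit : l2 (A.mulVec (restr J x)) ≤ l2 (A.mulVec x) + l2 (A.mulVec (restr Jᶜ x)) := by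
    rw [eq_sub_of_add_eq (restr_add_restr_compl J x), Matrix.mulVec_sub]
    exact l2_sub_le _ _
  have hτ : √t * μ + l1 (restr Jᶜ x) / √t ≤ (√s + 1) / (√t - 1) * l2 (restr J x) := by
    rw [div_mul_eq_mul_div, le_div_iff₀ hgap]
    linarith
  nlinarith [mul_le_mul_of_nonneg_left hτ hσmax]
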